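/- Let n ≥ 1 and let K be a field in which every polynomial of degree exactly n has a root. A linear map T : M_n(K) → M_n(K) preserves the L-relation if and only if there exist P ∈ GL_n(K) and X ∈ M_n(K) such that T(A) = PAX for all A ∈ M_n(K). -/

import Mathlib

/-!
For fixed `v`, all matrices `c vᵀ` with `c ≠ 0` have row space `K v`, so their images under
`T` share one row space `W`. Reading the rows of `T (c vᵀ)` through two functionals turns
`c ↦ T (c vᵀ)` into a pencil of endomorphisms of `Kⁿ`; since characteristic polynomials of
degree `n` have roots, the pencil has a generalized eigenvector, and this forces `dim W ≤ 1`.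
Hence `T (c vᵀ) = (G_v c) y_vᵀ` with `G_v` linear.

Fix `v₀` with `T (c v₀ᵀ) ≠ 0`; then `G_{v₀}` is injective. If `y_v ∥ y_{v₀}`, a generalized
eigenvector of the pair `(G_v, G_{v₀})` makes `c ↦ T (c (v - s v₀)ᵀ)` vanish at some `c ≠ 0`,
hence everywhere. Otherwise `T (c (v₀ + v)ᵀ)` has rank at most one only if `G_v c ∥ G_{v₀} c`
for all `c`, so `G_v` is a multiple of `G_{v₀}`. Either way `T (c vᵀ) = (P c) (Xᵀ v)ᵀ` with `P`
the invertible matrix of `G_{v₀}`.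
-/

def rowSpace {K : Type*} [Field K] {n : ℕ} (A : Matrix (Fin n) (Fin n) K) :
    Submodule K (Fin n → K) :=
  Submodule.span K (Set.range A)

open Matrix Polynomial Module Function

section GeneralizedEigenvector

variable {K V : Type*} [Field K] [AddCommGroup V] [Module K V] [FiniteDimensional K V]

theorem Module.End.exists_hasEigenvalue_of_forall_degree_eq
    (hK : ∀ p : K[X], p.degree = finrank K V → ∃ x, p.eval x = 0) (f : End K V) :
    ∃ μ, f.HasEigenvalue μ := by
  obtain ⟨μ, hμ⟩ := hK f.charpoly <| by
    rw [degree_eq_natDegree f.charpoly_monic.ne_zero, LinearMap.charpoly_natDegree]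
  exact ⟨μ, (f.hasEigenvalue_iff_isRoot_charpoly μ).mpr hμ⟩

theorem exists_ne_zero_apply_eq_smul_apply
    (hK : ∀ p : K[X], p.degree = finrank K V → ∃ x, p.eval x = 0)
    {g : V →ₗ[K] V} (hg : Injective g) (f : V →ₗ[K] V) :
    ∃ (s : K) (c : V), c ≠ 0 ∧ f c = s • g c := by
  let e := LinearEquiv.ofInjectiveEndo g hg
  obtain ⟨s, hs⟩ :=
    Module.End.exists_hasEigenvalue_of_forall_degree_eq hK (f ∘ₗ e.symm.toLinearMap)
  obtain ⟨w, hw, hw0⟩ := hs.exists_hasEigenvector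
  refine ⟨s, e.symm w, by simpa using hw0, ?_⟩
  have hge : g (e.symm w) = w := e.apply_symm_apply w
  simpa [hge] using Module.End.mem_eigenspace_iff.mp hw

theorem exists_eq_smul_of_forall_not_linearIndependent {G G₀ : V →ₗ[K] V}
    (hG₀ : Injective G₀) (h : ∀ c, ¬ LinearIndependent K ![G₀ c, G c]) : ∃ μ : K, G = μ • G₀ := by
  let e := LinearEquiv.ofInjectiveEndo G₀ hG₀
  have he : ∀ x, G₀ (e.symm x) = x := e.apply_symm_apply
  have he' : ∀ c, e.symm (G₀ c) = c := e.symm_apply_apply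
  obtain ⟨μ, hμ⟩ := LinearMap.exists_eq_smul_id_of_forall_notLinearIndependent
    (f := G ∘ₗ e.symm.toLinearMap) fun x => by simpa [he] using h (e.symm x)
  exact ⟨μ, LinearMap.ext fun c => by simpa [he'] using LinearMap.congr_fun hμ (G₀ c)⟩

end GeneralizedEigenvector

section RankOne

variable {K m n : Type*} [Field K]

theorem not_linearIndependent_of_vecMulVec_add_vecMulVec_eq {x x' x'' : m → K}
    {y y' y'' : n → K} (hy : y ∉ K ∙ y') (hy' : y' ∉ K ∙ y)
    (h : vecMulVec x y + vecMulVec x' y' = vecMulVec x'' y'') :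
    ¬ LinearIndependent K ![x, x'] := by
  obtain ⟨f, hfy, hf⟩ := Submodule.exists_dual_map_eq_bot_of_notMem hy inferInstance
  obtain ⟨g, hgy', hg⟩ := Submodule.exists_dual_map_eq_bot_of_notMem hy' inferInstance
  have hfy' : f y' = 0 := LinearMap.le_ker_iff_map.mpr hf (Submodule.mem_span_singleton_self y')
  have hgy : g y = 0 := LinearMap.le_ker_iff_map.mpr hg (Submodule.mem_span_singleton_self y)
  have hrow : ∀ i, x i • y + x' i • y' = x'' i • y'' := fun i => congrFun h i
  have hx : f y • x = f y'' • x'' := funext fun i => by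
    simpa [hfy', mul_comm] using congrArg f (hrow i)
  have hx' : g y' • x' = g y'' • x'' := funext fun i => by
    simpa [hgy, mul_comm] using congrArg g (hrow i)
  intro hli
  have hgy'' : g y'' * f y = 0 := (LinearIndependent.pair_iff.mp hli (g y'' * f y)
    (-(f y'' * g y')) (by linear_combination (norm := module) g y'' • hx - f y'' • hx')).1
  have hx'0 : g y' • x' = 0 := by
    rw [hx', (mul_eq_zero.mp hgy'').resolve_right hfy, zero_smul]
  exact hli.ne_zero 1 (by simpa [hgy'] using hx'0)

theorem exists_dual_smul_eq_of_mem_span_singleton {V : Type*} [AddCommGroup V] [Module K V]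
    (y : V) : ∃ φ : Dual K V, ∀ x ∈ K ∙ y, φ x • y = x := by
  rcases eq_or_ne y 0 with rfl | hy
  · exact ⟨0, fun x hx => by simp_all⟩
  · obtain ⟨φ, hφ⟩ := Module.Projective.exists_dual_eq_one K hy
    refine ⟨φ, fun x hx => ?_⟩
    obtain ⟨a, rfl⟩ := Submodule.mem_span_singleton.mp hx
    simp [hφ]

end RankOne

section RowSpace

variable {K : Type*} [Field K] {n : ℕ}

theorem rowSpace_eq_range_vecMulLinear (A : Matrix (Fin n) (Fin n) K) :
    rowSpace A = LinearMap.range A.vecMulLinear :=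
  (range_vecMulLinear A).symm

theorem rowSpace_le_iff {A : Matrix (Fin n) (Fin n) K} {W : Submodule K (Fin n → K)} :
    rowSpace A ≤ W ↔ ∀ i, A i ∈ W :=
  Submodule.span_le.trans Set.range_subset_iff

theorem row_mem_rowSpace (A : Matrix (Fin n) (Fin n) K) (i : Fin n) : A i ∈ rowSpace A :=
  Submodule.subset_span ⟨i, rfl⟩

@[simp]
theorem rowSpace_eq_bot_iff {A : Matrix (Fin n) (Fin n) K} : rowSpace A = ⊥ ↔ A = 0 := by
  simp only [eq_bot_iff, rowSpace_le_iff, Submodule.mem_bot]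
  exact ⟨fun h => funext h, fun h i => by rw [h]; rfl⟩

@[simp]
theorem rowSpace_zero : rowSpace (0 : Matrix (Fin n) (Fin n) K) = ⊥ :=
  rowSpace_eq_bot_iff.mpr rfl

theorem rowSpace_vecMulVec {c : Fin n → K} (hc : c ≠ 0) (v : Fin n → K) :
    rowSpace (vecMulVec c v) = K ∙ v := by
  have hrow : ∀ i, vecMulVec c v i = c i • v := fun _ => rfl
  refine le_antisymm (rowSpace_le_iff.mpr fun i => ?_)
    ((Submodule.span_singleton_le_iff_mem _ _).mpr ?_)
  · rw [hrow]
    exact Submodule.smul_mem _ _ (Submodule.mem_span_singleton_self v)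
  · obtain ⟨i, hi⟩ := Function.ne_iff.mp hc
    have hmem := Submodule.smul_mem _ (c i)⁻¹ (row_mem_rowSpace (vecMulVec c v) i)
    rwa [hrow, smul_smul, inv_mul_cancel₀ hi, one_smul] at hmem

theorem rowSpace_mul_mul {P : Matrix (Fin n) (Fin n) K} (hP : IsUnit P)
    (A X : Matrix (Fin n) (Fin n) K) :
    rowSpace (P * A * X) = (rowSpace A).map X.vecMulLinear := by
  have hcomp :
      (P * A * X).vecMulLinear = (X.vecMulLinear ∘ₗ A.vecMulLinear) ∘ₗ P.vecMulLinear :=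
    LinearMap.ext fun v => by simp [vecMul_vecMul]
  rw [rowSpace_eq_range_vecMulLinear, rowSpace_eq_range_vecMulLinear, hcomp,
    LinearMap.range_comp_of_range_eq_top _
      (LinearMap.range_eq_top.mpr (vecMul_surjective_iff_isUnit.mpr hP)),
    LinearMap.range_comp]

end RowSpace

section LinearFamily

variable {K : Type*} [Field K] {n : ℕ}

theorem mem_span_singleton_of_forall_mem_rowSpace
    (hK : ∀ p : K[X], p.degree = n → ∃ x, p.eval x = 0)
    (L : (Fin n → K) →ₗ[K] Matrix (Fin n) (Fin n) K) {y w : Fin n → K} (hy0 : y ≠ 0)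
    (hy : ∀ c ≠ 0, y ∈ rowSpace (L c)) (hw : ∀ c ≠ 0, w ∈ rowSpace (L c)) : w ∈ K ∙ y := by
  by_contra hwy
  obtain ⟨f, hfw, hf⟩ := Submodule.exists_dual_map_eq_bot_of_notMem hwy inferInstance
  have hfy : f y = 0 := LinearMap.le_ker_iff_map.mpr hf (Submodule.mem_span_singleton_self y)
  obtain ⟨g, hgy⟩ := Module.Projective.exists_dual_ne_zero K hy0
  have hvanish : ∀ (φ : Dual K (Fin n → K)) c, c ≠ 0 → φ.compLeft (Fin n) (L c) = 0 →
      φ y = 0 ∧ φ w = 0 := by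
    intro φ c hc hφ
    have hker : rowSpace (L c) ≤ LinearMap.ker φ := rowSpace_le_iff.mpr fun i => congrFun hφ i
    exact ⟨hker (hy c hc), hker (hw c hc)⟩
  have hg : Injective (g.compLeft (Fin n) ∘ₗ L) := by
    refine (injective_iff_map_eq_zero _).mpr fun c hc => ?_
    by_contra hc0
    exact hgy (hvanish g c hc0 hc).1
  obtain ⟨s, c, hc, hfc⟩ := exists_ne_zero_apply_eq_smul_apply (by simpa using hK) hg
    (f.compLeft (Fin n) ∘ₗ L)
  obtain ⟨hsy, hsw⟩ := hvanish (f - s • g) c hc <| funext fun i => by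
    have hfci : f (L c i) = s * g (L c i) := congrFun hfc i
    change (f - s • g) (L c i) = 0
    simp [hfci]
  have hs : s = 0 := by simpa [hfy, hgy] using hsy
  exact hfw (by simpa [hs] using hsw)

theorem exists_rowSpace_le_span_singleton
    (hK : ∀ p : K[X], p.degree = n → ∃ x, p.eval x = 0)
    (L : (Fin n → K) →ₗ[K] Matrix (Fin n) (Fin n) K)
    (hL : ∀ c c', c ≠ 0 → c' ≠ 0 → rowSpace (L c) = rowSpace (L c')) :
    ∃ y, ∀ c, rowSpace (L c) ≤ K ∙ y := by
  by_cases h : ∀ c, rowSpace (L c) = ⊥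
  · exact ⟨0, fun c => by simp [h c]⟩
  · obtain ⟨c₁, hc₁⟩ := not_forall.mp h
    have hc₁0 : c₁ ≠ 0 := by rintro rfl; simp at hc₁
    obtain ⟨y, hy, hy0⟩ := Submodule.exists_mem_ne_zero_of_ne_bot hc₁
    have hmem : ∀ u ∈ rowSpace (L c₁), ∀ c ≠ 0, u ∈ rowSpace (L c) :=
      fun u hu c hc => hL c₁ c hc₁0 hc ▸ hu
    refine ⟨y, fun c w hw => ?_⟩
    rcases eq_or_ne c 0 with rfl | hc
    · simp_all [rowSpace_zero]
    · exact mem_span_singleton_of_forall_mem_rowSpace hK L hy0 (hmem y hy)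
        (hmem w (hL c c₁ hc hc₁0 ▸ hw))

end LinearFamily

def PreservesLRelation {K : Type*} [Field K] {n : ℕ}
    (T : Matrix (Fin n) (Fin n) K → Matrix (Fin n) (Fin n) K) : Prop :=
  ∀ A B, rowSpace A = rowSpace B → rowSpace (T A) = rowSpace (T B)

namespace PreservesLRelation

variable {K : Type*} [Field K] {n : ℕ}
  {T : Matrix (Fin n) (Fin n) K →ₗ[K] Matrix (Fin n) (Fin n) K}

theorem apply_vecMulVec_eq_zero (hT : PreservesLRelation T) {c v : Fin n → K} (hc : c ≠ 0)
    (h : T (vecMulVec c v) = 0) (c' : Fin n → K) : T (vecMulVec c' v) = 0 := by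
  rcases eq_or_ne c' 0 with rfl | hc'
  · simp
  · have hL := hT (vecMulVec c' v) (vecMulVec c v)
      (by rw [rowSpace_vecMulVec hc', rowSpace_vecMulVec hc])
    rwa [h, rowSpace_zero, rowSpace_eq_bot_iff] at hL

theorem exists_apply_vecMulVec_eq (hK : ∀ p : K[X], p.degree = n → ∃ x, p.eval x = 0)
    (hT : PreservesLRelation T) (v : Fin n → K) :
    ∃ (G : (Fin n → K) →ₗ[K] Fin n → K) (y : Fin n → K),
      ∀ c, T (vecMulVec c v) = vecMulVec (G c) y := by
  let L := T ∘ₗ (vecMulVecBilin K K).flip v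
  obtain ⟨y, hy⟩ := exists_rowSpace_le_span_singleton hK L fun c c' hc hc' =>
    hT (vecMulVec c v) (vecMulVec c' v) (by rw [rowSpace_vecMulVec hc, rowSpace_vecMulVec hc'])
  obtain ⟨φ, hφ⟩ := exists_dual_smul_eq_of_mem_span_singleton (K := K) y
  refine ⟨φ.compLeft (Fin n) ∘ₗ L, y, fun c => funext fun i => ?_⟩
  exact (hφ _ (rowSpace_le_iff.mp (hy c) i)).symm

theorem exists_apply_vecMulVec_eq_of_injective
    (hK : ∀ p : K[X], p.degree = n → ∃ x, p.eval x = 0) (hT : PreservesLRelation T)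
    {v₀ y₀ : Fin n → K} {G₀ : (Fin n → K) →ₗ[K] Fin n → K} (hG₀ : Injective G₀)
    (hy₀ : y₀ ≠ 0) (h₀ : ∀ c, T (vecMulVec c v₀) = vecMulVec (G₀ c) y₀) (v : Fin n → K) :
    ∃ w, ∀ c, T (vecMulVec c v) = vecMulVec (G₀ c) w := by
  obtain ⟨G, y, h⟩ := hT.exists_apply_vecMulVec_eq hK v
  by_cases hy : y ∈ K ∙ y₀
  · obtain ⟨κ, rfl⟩ := Submodule.mem_span_singleton.mp hy
    obtain ⟨s, c₁, hc₁, hs⟩ :=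
      exists_ne_zero_apply_eq_smul_apply (by simpa using hK) hG₀ (κ • G)
    have hs' : κ • G c₁ = s • G₀ c₁ := hs
    have hzero : T (vecMulVec c₁ (v - s • v₀)) = 0 := by
      rw [vecMulVec_sub, vecMulVec_smul, map_sub, map_smul, h, h₀, vecMulVec_smul,
        ← smul_vecMulVec, hs', smul_vecMulVec, sub_self]
    refine ⟨s • y₀, fun c => ?_⟩
    have hc := hT.apply_vecMulVec_eq_zero hc₁ hzero c
    rw [vecMulVec_sub, map_sub, sub_eq_zero, vecMulVec_smul, map_smul, h₀] at hc
    rw [hc, vecMulVec_smul]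
  · have hy₀y : y₀ ∉ K ∙ y := by
      intro hmem
      obtain ⟨a, rfl⟩ := Submodule.mem_span_singleton.mp hmem
      have ha : a ≠ 0 := by rintro rfl; simp at hy₀
      exact hy (Submodule.mem_span_singleton.mpr
        ⟨a⁻¹, by rw [smul_smul, inv_mul_cancel₀ ha, one_smul]⟩)
    obtain ⟨μ, hμ⟩ := exists_eq_smul_of_forall_not_linearIndependent hG₀ fun c => by
      obtain ⟨G', y', h'⟩ := hT.exists_apply_vecMulVec_eq hK (v₀ + v)
      have hsum : vecMulVec (G₀ c) y₀ + vecMulVec (G c) y = vecMulVec (G' c) y' := by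
        rw [← h₀, ← h, ← map_add, ← vecMulVec_add, h']
      exact not_linearIndependent_of_vecMulVec_add_vecMulVec_eq hy₀y hy hsum
    refine ⟨μ • y, fun c => ?_⟩
    rw [h, hμ, LinearMap.smul_apply, smul_vecMulVec, vecMulVec_smul]

end PreservesLRelation

theorem eq_mul_mul_of_apply_single {R l m n o : Type*} [CommSemiring R] [Fintype m] [Fintype n]
    [DecidableEq m] [DecidableEq n] {T : Matrix m n R →ₗ[R] Matrix l o R} {P : Matrix l m R}
    {X : Matrix n o R} (h : ∀ i j, T (single i j (1 : R)) = P * single i j (1 : R) * X)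
    (A : Matrix m n R) : T A = P * A * X := by
  induction A using Matrix.induction_on' with
  | h_zero => simp
  | h_add A B hA hB => rw [map_add, hA, hB, Matrix.mul_add, Matrix.add_mul]
  | h_std_basis i j x =>
    have hx : single i j x = x • single i j (1 : R) := by rw [smul_single, smul_eq_mul, mul_one]
    rw [hx, map_smul, h, Matrix.mul_smul, Matrix.smul_mul]

theorem L_preserver_iff_form_general
    {K : Type*} [Field K] {n : ℕ}
    (hK : ∀ p : Polynomial K, p.degree = n → ∃ x : K, p.eval x = 0)
    (T : Matrix (Fin n) (Fin n) K →ₗ[K] Matrix (Fin n) (Fin n) K) :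
    (∀ A B : Matrix (Fin n) (Fin n) K,
        rowSpace A = rowSpace B → rowSpace (T A) = rowSpace (T B)) ↔
      ∃ (P X : Matrix (Fin n) (Fin n) K), IsUnit P ∧
        ∀ A : Matrix (Fin n) (Fin n) K, T A = P * A * X := by
  refine ⟨fun (hT : PreservesLRelation T) => ?_, fun ⟨P, X, hP, hPX⟩ A B hAB => by
    rw [hPX, hPX, rowSpace_mul_mul hP, rowSpace_mul_mul hP, hAB]⟩
  by_cases hT0 : ∀ c v, T (vecMulVec c v) = 0
  · exact ⟨1, 0, isUnit_one, eq_mul_mul_of_apply_single fun i j => by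
      simp [single_eq_single_vecMulVec_single, hT0]⟩
  obtain ⟨c₀, v₀, hTc₀⟩ : ∃ c₀ v₀, T (vecMulVec c₀ v₀) ≠ 0 := by simpa using hT0
  obtain ⟨G₀, y₀, h₀⟩ := hT.exists_apply_vecMulVec_eq hK v₀
  have hG₀ : Injective G₀ := (injective_iff_map_eq_zero G₀).mpr fun c hc => by
    by_contra hc0
    exact hTc₀ (hT.apply_vecMulVec_eq_zero hc0 (by rw [h₀, hc, zero_vecMulVec]) c₀)
  have hy₀ : y₀ ≠ 0 := by rintro rfl; simp [h₀] at hTc₀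
  choose w hw using hT.exists_apply_vecMulVec_eq_of_injective hK hG₀ hy₀ h₀
  refine ⟨LinearMap.toMatrix' G₀, of fun j => w (Pi.single j 1),
    mulVec_injective_iff_isUnit.mp (funext (LinearMap.toMatrix'_mulVec G₀) ▸ hG₀),
    eq_mul_mul_of_apply_single fun i j => ?_⟩
  rw [single_eq_single_vecMulVec_single, hw, mul_vecMulVec, vecMulVec_mul, single_one_vecMul,
    LinearMap.toMatrix'_mulVec]
  rfl

/-- Over a field in which every polynomial of degree exactly `n` has a root,
the linear maps on `M_n(K)` preserving Green's `L`-relation are precisely those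
of the form `A ↦ P * A * X` with `P` invertible and `X` an arbitrary matrix. -/
theorem L_preserver_iff_form
    {K : Type*} [Field K] {n : ℕ} (hn : 1 ≤ n)
    (hK : ∀ p : Polynomial K, p.degree = n → ∃ x : K, p.eval x = 0)
    (T : Matrix (Fin n) (Fin n) K →ₗ[K] Matrix (Fin n) (Fin n) K) :
    (∀ A B : Matrix (Fin n) (Fin n) K,
        rowSpace A = rowSpace B → rowSpace (T A) = rowSpace (T B)) ↔
      ∃ (P X : Matrix (Fin n) (Fin n) K), IsUnit P ∧
        ∀ A : Matrix (Fin n) (Fin n) K, T A = P * A * X :=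
  L_preserver_iff_form_general hK T
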